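/- Combined error bound for ridge fit-and-transfer: with Y = U V^T + ℰ, Y_v = U v + ℰ_v, v = V^T b + e, Σ̃, Σ̂ symmetric PSD, λ > 0, γ̃, γ̂ ∈ ℝ^m, β* = (Σ̃+λI)^{-1} γ̃, β̂ = (Σ̂+λI)^{-1} γ̂, Ŷ_v = Y β̂, and r = Y_v − Y β*, one has ‖Ŷ_v − Y_v‖₂ ≤ ‖r‖₂ + (‖Y‖₂/(σ_min(Σ̂)+λ))(‖Σ̂ − Σ̃‖₂‖β*‖₂ + ‖γ̂ − γ̃‖₂), and moreover ‖r‖₂ ≤ ‖U e‖₂ + ‖ℰ_v − ℰ b‖₂ + (‖Y‖₂/(σ_min(Σ̃)+λ))(λ‖b‖₂ + ‖γ̃ − Σ̃ b‖₂). -/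

import Mathlib

open Matrix

noncomputable def enorm' {n : ℕ} (x : Fin n → ℝ) : ℝ :=
  Real.sqrt (∑ i, x i ^ 2)

noncomputable def opNorm {n m : ℕ} (M : Matrix (Fin n) (Fin m) ℝ) : ℝ :=
  sSup {c : ℝ | ∃ x : Fin m → ℝ, enorm' x = 1 ∧ c = enorm' (M.mulVec x)}

noncomputable def sigmaMin {m : ℕ} {A : Matrix (Fin m) (Fin m) ℝ}
    (hA : A.IsHermitian) : ℝ :=
  ⨅ i, hA.eigenvalues i

/-! If `(S + λI) x = w` with `S` symmetric, then
`(σ_min(S) + λ) ‖x‖² ≤ xᵀ (S + λI) x = xᵀ w ≤ ‖x‖ ‖w‖`, so `‖x‖ ≤ ‖w‖ / (σ_min(S) + λ)`.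
Both bounds follow from this estimate: for `x = β̂ - β*` the right-hand side is
`w = (γ̂ - γ̃) - (Σ̂ - Σ̃) β*`, and for `x = b - β*` it is `w = λ b - (γ̃ - Σ̃ b)`.
It remains to multiply by `‖Y‖₂` and apply the triangle inequality to the decompositions
`Ŷ_v - Y_v = Y (β̂ - β*) - r` and `r = U e + (ℰ_v - ℰ b) + Y (b - β*)`. -/

section EuclideanNorm

variable {n m : ℕ}

lemma enorm'_eq_norm_toLp (x : Fin n → ℝ) : enorm' x = ‖WithLp.toLp 2 x‖ := by
  simp [enorm', EuclideanSpace.norm_eq, sq_abs]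

lemma enorm'_nonneg (x : Fin n → ℝ) : 0 ≤ enorm' x := Real.sqrt_nonneg _

lemma enorm'_add_le (x y : Fin n → ℝ) : enorm' (x + y) ≤ enorm' x + enorm' y := by
  simpa only [enorm'_eq_norm_toLp, WithLp.toLp_add] using norm_add_le _ _

lemma enorm'_sub_le (x y : Fin n → ℝ) : enorm' (x - y) ≤ enorm' x + enorm' y := by
  simpa only [enorm'_eq_norm_toLp, WithLp.toLp_sub] using norm_sub_le _ _

lemma enorm'_smul (c : ℝ) (x : Fin n → ℝ) : enorm' (c • x) = |c| * enorm' x := by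
  simp only [enorm'_eq_norm_toLp, WithLp.toLp_smul, norm_smul, Real.norm_eq_abs]

lemma enorm'_eq_zero {x : Fin n → ℝ} : enorm' x = 0 ↔ x = 0 := by
  simp only [enorm'_eq_norm_toLp, norm_eq_zero, WithLp.toLp_eq_zero]

lemma enorm'_sq (x : Fin n → ℝ) : enorm' x ^ 2 = x ⬝ᵥ x := by
  rw [enorm', Real.sq_sqrt (by positivity)]
  simp only [dotProduct, sq]

lemma dotProduct_le_enorm'_mul_enorm' (x y : Fin n → ℝ) : x ⬝ᵥ y ≤ enorm' x * enorm' y :=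
  Real.sum_mul_le_sqrt_mul_sqrt _ x y

open scoped Matrix.Norms.L2Operator in
lemma enorm'_mulVec_le_l2_opNorm_mul (M : Matrix (Fin n) (Fin m) ℝ) (x : Fin m → ℝ) :
    enorm' (M *ᵥ x) ≤ ‖M‖ * enorm' x := by
  rw [enorm'_eq_norm_toLp, enorm'_eq_norm_toLp]
  exact M.l2_opNorm_mulVec (WithLp.toLp 2 x)

lemma bddAbove_enorm'_mulVec_unit (M : Matrix (Fin n) (Fin m) ℝ) :
    BddAbove {c : ℝ | ∃ x : Fin m → ℝ, enorm' x = 1 ∧ c = enorm' (M.mulVec x)} := by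
  open scoped Matrix.Norms.L2Operator in
  refine ⟨‖M‖, ?_⟩
  rintro c ⟨x, hx, rfl⟩
  simpa only [hx, mul_one] using enorm'_mulVec_le_l2_opNorm_mul M x

lemma opNorm_nonneg (M : Matrix (Fin n) (Fin m) ℝ) : 0 ≤ opNorm M :=
  Real.sSup_nonneg fun _ ⟨_, _, hc⟩ ↦ hc ▸ enorm'_nonneg _

lemma enorm'_mulVec_le_opNorm_mul (M : Matrix (Fin n) (Fin m) ℝ) (x : Fin m → ℝ) :
    enorm' (M *ᵥ x) ≤ opNorm M * enorm' x := by
  rcases (enorm'_nonneg x).eq_or_lt with hx | hx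
  · rw [← hx, mul_zero, enorm'_eq_zero.mp hx.symm, mulVec_zero, enorm'_eq_zero.mpr rfl]
  · have hunit : enorm' ((enorm' x)⁻¹ • x) = 1 := by
      rw [enorm'_smul, abs_of_pos (inv_pos.mpr hx), inv_mul_cancel₀ hx.ne']
    have hle : _ ≤ opNorm M := le_csSup (bddAbove_enorm'_mulVec_unit M) ⟨_, hunit, rfl⟩
    rw [mulVec_smul, enorm'_smul, abs_of_pos (inv_pos.mpr hx), inv_mul_le_iff₀ hx] at hle
    linarith

lemma enorm'_mulVec_le_of_le_div (M : Matrix (Fin n) (Fin m) ℝ) {x : Fin m → ℝ} {a c : ℝ}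
    (hx : enorm' x ≤ a / c) : enorm' (M *ᵥ x) ≤ opNorm M / c * a :=
  calc enorm' (M *ᵥ x) ≤ opNorm M * (a / c) :=
        (enorm'_mulVec_le_opNorm_mul M x).trans (mul_le_mul_of_nonneg_left hx (opNorm_nonneg M))
    _ = opNorm M / c * a := by ring

end EuclideanNorm

section SmallestEigenvalue

variable {m : ℕ} {A : Matrix (Fin m) (Fin m) ℝ}

lemma sigmaMin_le_eigenvalues (hA : A.IsHermitian) (i : Fin m) : sigmaMin hA ≤ hA.eigenvalues i :=
  ciInf_le (Set.finite_range _).bddBelow i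

lemma sigmaMin_nonneg (hA : A.PosSemidef) : 0 ≤ sigmaMin hA.1 := by
  cases isEmpty_or_nonempty (Fin m)
  · simp [sigmaMin, Real.iInf_of_isEmpty]
  · exact le_ciInf hA.eigenvalues_nonneg

lemma Matrix.IsHermitian.posSemidef_sub_smul_one (hA : A.IsHermitian) {c : ℝ}
    (hc : ∀ i, c ≤ hA.eigenvalues i) :
    (A - c • (1 : Matrix (Fin m) (Fin m) ℝ)).PosSemidef := by
  set u := hA.eigenvectorUnitary
  have hdiag : A - c • (1 : Matrix (Fin m) (Fin m) ℝ) =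
      Unitary.conjStarAlgAut ℝ _ u (diagonal fun i ↦ hA.eigenvalues i - c) := by
    conv_lhs => rw [hA.spectral_theorem, ← map_one (Unitary.conjStarAlgAut ℝ _ u)]
    rw [← map_smul, ← map_sub, smul_one_eq_diagonal, diagonal_sub]
    rfl
  rw [hdiag, Unitary.conjStarAlgAut_apply]
  exact (PosSemidef.diagonal fun i ↦ sub_nonneg.2 (hc i)).mul_mul_conjTranspose_same _

lemma sigmaMin_mul_dotProduct_le (hA : A.IsHermitian) (x : Fin m → ℝ) :
    sigmaMin hA * (x ⬝ᵥ x) ≤ x ⬝ᵥ (A *ᵥ x) := by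
  have := (hA.posSemidef_sub_smul_one (sigmaMin_le_eigenvalues hA)).dotProduct_mulVec_nonneg x
  rw [star_trivial, sub_mulVec, smul_mulVec, one_mulVec, dotProduct_sub, dotProduct_smul,
    smul_eq_mul] at this
  linarith

end SmallestEigenvalue

section Ridge

variable {m : ℕ} {S : Matrix (Fin m) (Fin m) ℝ} {lam : ℝ}

lemma add_smul_one_mulVec_inv_mulVec (hS : S.PosSemidef) (hlam : 0 < lam) (w : Fin m → ℝ) :
    (S + lam • (1 : Matrix (Fin m) (Fin m) ℝ)) *ᵥ
      ((S + lam • (1 : Matrix (Fin m) (Fin m) ℝ))⁻¹ *ᵥ w) = w := by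
  have hunit : IsUnit (S + lam • (1 : Matrix (Fin m) (Fin m) ℝ)) :=
    (PosDef.posSemidef_add hS (PosDef.one.smul hlam)).isUnit
  rw [mulVec_mulVec, mul_nonsing_inv _ ((isUnit_iff_isUnit_det _).mp hunit), one_mulVec]

lemma enorm'_le_div_of_add_smul_one_mulVec_eq (hS : S.IsHermitian) (hc : 0 < sigmaMin hS + lam)
    {x w : Fin m → ℝ} (hx : (S + lam • (1 : Matrix (Fin m) (Fin m) ℝ)) *ᵥ x = w) :
    enorm' x ≤ enorm' w / (sigmaMin hS + lam) := by
  have hquad : (sigmaMin hS + lam) * enorm' x ^ 2 ≤ enorm' x * enorm' w := by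
    have hxw : x ⬝ᵥ w = x ⬝ᵥ (S *ᵥ x) + lam * (x ⬝ᵥ x) := by
      rw [← hx, add_mulVec, smul_mulVec, one_mulVec, dotProduct_add, dotProduct_smul, smul_eq_mul]
    rw [enorm'_sq]
    nlinarith [sigmaMin_mul_dotProduct_le hS x, dotProduct_le_enorm'_mul_enorm' x w]
  rw [le_div_iff₀ hc]
  nlinarith [enorm'_nonneg x, enorm'_nonneg w]

lemma enorm'_sub_le_of_ridge_eqs {St Sh : Matrix (Fin m) (Fin m) ℝ} (hSh : Sh.IsHermitian)
    (hc : 0 < sigmaMin hSh + lam) {βt βh γt γh : Fin m → ℝ}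
    (hβt : (St + lam • (1 : Matrix (Fin m) (Fin m) ℝ)) *ᵥ βt = γt)
    (hβh : (Sh + lam • (1 : Matrix (Fin m) (Fin m) ℝ)) *ᵥ βh = γh) :
    enorm' (βh - βt) ≤
      (opNorm (Sh - St) * enorm' βt + enorm' (γh - γt)) / (sigmaMin hSh + lam) := by
  have hdiff : (Sh + lam • (1 : Matrix (Fin m) (Fin m) ℝ)) *ᵥ (βh - βt) =
      (γh - γt) - (Sh - St) *ᵥ βt := by
    rw [mulVec_sub, hβh, ← hβt, add_mulVec, add_mulVec, sub_mulVec]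
    abel
  refine (enorm'_le_div_of_add_smul_one_mulVec_eq hSh hc hdiff).trans ?_
  gcongr
  linarith [enorm'_sub_le (γh - γt) ((Sh - St) *ᵥ βt),
    enorm'_mulVec_le_opNorm_mul (Sh - St) βt]

lemma enorm'_sub_le_of_ridge_eq (hS : S.IsHermitian) (hc : 0 < sigmaMin hS + lam) (hlam : 0 ≤ lam)
    {β γ : Fin m → ℝ} (hβ : (S + lam • (1 : Matrix (Fin m) (Fin m) ℝ)) *ᵥ β = γ)
    (b : Fin m → ℝ) :
    enorm' (b - β) ≤ (lam * enorm' b + enorm' (γ - S *ᵥ b)) / (sigmaMin hS + lam) := by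
  have hdiff :
      (S + lam • (1 : Matrix (Fin m) (Fin m) ℝ)) *ᵥ (b - β) = lam • b - (γ - S *ᵥ b) := by
    rw [mulVec_sub, hβ, add_mulVec, smul_mulVec, one_mulVec]
    abel
  refine (enorm'_le_div_of_add_smul_one_mulVec_eq hS hc hdiff).trans ?_
  gcongr
  simpa only [enorm'_smul, abs_of_nonneg hlam] using enorm'_sub_le (lam • b) (γ - S *ᵥ b)

end Ridge

/-- Combined error bound for ridge fit-and-transfer (Theorem 1 of the paper):
the prediction error splits into a structural error `‖r‖₂` and an estimation
error, and the structural error is itself bounded. -/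
theorem ridge_fit_and_transfer_error_bound
    (n m d : ℕ) (lam : ℝ) (hlam : 0 < lam)
    (U : Matrix (Fin n) (Fin d) ℝ)
    (V : Matrix (Fin m) (Fin d) ℝ)
    (E : Matrix (Fin n) (Fin m) ℝ)
    (Ev : Fin n → ℝ)
    (v : Fin d → ℝ) (b : Fin m → ℝ) (e : Fin d → ℝ)
    (hv : v = V.transpose.mulVec b + e)
    (Y : Matrix (Fin n) (Fin m) ℝ) (hY : Y = U * V.transpose + E)
    (Yv : Fin n → ℝ) (hYv : Yv = U.mulVec v + Ev)
    (St Sh : Matrix (Fin m) (Fin m) ℝ)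
    (hSt : St.PosSemidef) (hSh : Sh.PosSemidef)
    (γt γh : Fin m → ℝ)
    (βstar βhat : Fin m → ℝ)
    (hβstar : βstar = (St + lam • (1 : Matrix (Fin m) (Fin m) ℝ))⁻¹.mulVec γt)
    (hβhat : βhat = (Sh + lam • (1 : Matrix (Fin m) (Fin m) ℝ))⁻¹.mulVec γh)
    (Yhat : Fin n → ℝ) (hYhat : Yhat = Y.mulVec βhat)
    (r : Fin n → ℝ) (hr : r = Yv - Y.mulVec βstar) :
    enorm' (Yhat - Yv) ≤
      enorm' r +
        (opNorm Y / (sigmaMin hSh.1 + lam)) *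
          (opNorm (Sh - St) * enorm' βstar + enorm' (γh - γt)) ∧
    enorm' r ≤
      enorm' (U.mulVec e) + enorm' (Ev - E.mulVec b) +
        (opNorm Y / (sigmaMin hSt.1 + lam)) *
          (lam * enorm' b + enorm' (γt - St.mulVec b)) := by
  have hβstar' := hβstar ▸ add_smul_one_mulVec_inv_mulVec hSt hlam γt
  have hβhat' := hβhat ▸ add_smul_one_mulVec_inv_mulVec hSh hlam γh
  have hct := add_pos_of_nonneg_of_pos (sigmaMin_nonneg hSt) hlam
  have hch := add_pos_of_nonneg_of_pos (sigmaMin_nonneg hSh) hlam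
  constructor
  · have hsplit : Yhat - Yv = Y *ᵥ (βhat - βstar) - r := by
      rw [hYhat, hr, mulVec_sub]
      abel
    rw [hsplit]
    linarith [enorm'_sub_le (Y *ᵥ (βhat - βstar)) r,
      enorm'_mulVec_le_of_le_div Y (enorm'_sub_le_of_ridge_eqs hSh.1 hch hβstar' hβhat')]
  · have hsplit : r = U *ᵥ e + (Ev - E *ᵥ b) + Y *ᵥ (b - βstar) := by
      rw [hr, hYv, hv, hY]
      simp only [mulVec_add, add_mulVec, mulVec_sub, ← mulVec_mulVec]
      abel
    rw [hsplit]
    linarith [enorm'_add_le (U *ᵥ e + (Ev - E *ᵥ b)) (Y *ᵥ (b - βstar)),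
      enorm'_add_le (U *ᵥ e) (Ev - E *ᵥ b),
      enorm'_mulVec_le_of_le_div Y (enorm'_sub_le_of_ridge_eq hSt.1 hct hlam.le hβstar' b)]
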